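/- Let R be a finite commutative local ring of odd characteristic in which -1 is not a square of a unit, and let ν be a positive even integer. Then I_{2ν} is cogredient to H_{2ν}, and I_{2ν+1} is cogredient to H_{2ν} ⊕ (1) over R. -/

import Mathlib

/-- Two square matrices are cogredient if `P * S1 * P.transpose = S2` for some invertible `P`. -/
def Cogredient {R : Type*} [CommRing R] {n : Type*} [Fintype n] [DecidableEq n]
    (S1 S2 : Matrix n n R) : Prop :=
  ∃ P : Matrix n n R, IsUnit P.det ∧ P * S1 * P.transpose = S2

/-- Block diagonal sum `A ⊕ B` of square matrices. -/
def matOplus {R : Type*} [CommRing R] {a b : ℕ}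
    (A : Matrix (Fin a) (Fin a) R) (B : Matrix (Fin b) (Fin b) R) :
    Matrix (Fin (a + b)) (Fin (a + b)) R :=
  (Matrix.reindex finSumFinEquiv finSumFinEquiv) (Matrix.fromBlocks A 0 0 B)

/-- The hyperbolic matrix `H_{2ν} = [[0, I_ν], [I_ν, 0]]`. -/
def hypMat (R : Type*) [CommRing R] (ν : ℕ) : Matrix (Fin (ν + ν)) (Fin (ν + ν)) R :=
  (Matrix.reindex finSumFinEquiv finSumFinEquiv)
    (Matrix.fromBlocks (0 : Matrix (Fin ν) (Fin ν) R) 1 1 0)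

/-!
If `2` is a unit in the finite local ring `R`, then `-1 = a² + b²` in `R`: this holds in the finite
residue field, and Hensel's lemma lifts it (a finite local ring is Artinian, hence Henselian).
For `ν = 2μ` the matrix `N = [[a I_μ, b I_μ], [b I_μ, -a I_μ]]` satisfies `N Nᵀ = -I_ν`, and then
`P = [[I, N], [I/2, -N/2]]` satisfies `P Pᵀ = H_{2ν}`.
-/

open Matrix IsLocalRing Polynomial

theorem isUnit_two_of_odd_ringChar {R : Type*} [CommRing R] (hchar : Odd (ringChar R)) :
    IsUnit (2 : R) := by
  obtain ⟨k, hk⟩ := hchar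
  have hzero : (2 * k + 1 : R) = 0 := by exact_mod_cast hk ▸ ringChar.Nat.cast_ringChar
  exact .of_mul_eq_one (-(k : R)) (by linear_combination -hzero)

namespace IsLocalRing

variable {R : Type*} [CommRing R] [IsLocalRing R]

theorem exists_sq_eq_of_sq_sub_mem [HenselianRing R (maximalIdeal R)] (h2 : IsUnit (2 : R))
    {b u : R} (hb : IsUnit b) (h : b ^ 2 - u ∈ maximalIdeal R) : ∃ a, a ^ 2 = u := by
  obtain ⟨a, ha, -⟩ := HenselianRing.is_henselian (X ^ 2 - C u) (monic_X_pow_sub_C u two_ne_zero)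
    b (by simp only [eval_sub, eval_pow, eval_X, eval_C]; exact h) (by
      convert (h2.mul hb).map (Ideal.Quotient.mk (maximalIdeal R)) using 2
      simp only [derivative_sub, derivative_X_pow, derivative_C, eval_sub, eval_mul, eval_C,
        eval_pow, eval_X]
      norm_num)
  exact ⟨a, sub_eq_zero.mp (by simpa using ha)⟩

theorem exists_sq_add_sq_of_residue [HenselianRing R (maximalIdeal R)] (h2 : IsUnit (2 : R))
    {c : R} {x y : ResidueField R} (hx : x ≠ 0) (hxy : x ^ 2 + y ^ 2 = residue R c) :
    ∃ a b : R, a ^ 2 + b ^ 2 = c := by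
  obtain ⟨a₀, rfl⟩ := residue_surjective x
  obtain ⟨b, rfl⟩ := residue_surjective y
  have ha₀ : IsUnit a₀ := (residue_ne_zero_iff_isUnit a₀).mp hx
  have hmem : a₀ ^ 2 - (c - b ^ 2) ∈ maximalIdeal R := by
    rw [← residue_eq_zero_iff, map_sub, map_sub, ← hxy]
    simp
  obtain ⟨a, ha⟩ := exists_sq_eq_of_sq_sub_mem h2 ha₀ hmem
  exact ⟨a, b, by rw [ha]; ring⟩

theorem exists_sq_add_sq_eq_neg_one [Finite R] (h2 : IsUnit (2 : R)) :
    ∃ a b : R, a ^ 2 + b ^ 2 = -1 := by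
  have : Finite (ResidueField R) := .of_surjective (residue R) residue_surjective
  have : NeZero (ringChar (ResidueField R)) :=
    ⟨CharP.char_ne_zero_of_finite (ResidueField R) _⟩
  obtain ⟨x, y, hxy⟩ := CharP.sq_add_sq (ResidueField R) (ringChar (ResidueField R)) (-1)
  push_cast at hxy
  by_cases hx : (x : ResidueField R) = 0
  · have hy : (y : ResidueField R) ≠ 0 := by rintro hy; simp [hx, hy] at hxy
    obtain ⟨a, b, h⟩ := exists_sq_add_sq_of_residue h2 hy (c := -1) (by simpa [add_comm] using hxy)
    exact ⟨b, a, by rw [add_comm, h]⟩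
  · exact exists_sq_add_sq_of_residue h2 hx (by simpa using hxy)

end IsLocalRing

section

variable {R : Type*} [CommRing R] {n m : Type*} [Fintype n] [DecidableEq n] [Fintype m]
  [DecidableEq m]

namespace Cogredient

theorem refl (A : Matrix n n R) : Cogredient A A := ⟨1, by simp, by simp⟩

theorem reindex (e : n ≃ m) {A B : Matrix n n R} (h : Cogredient A B) :
    Cogredient (Matrix.reindex e e A) (Matrix.reindex e e B) := by
  obtain ⟨P, hdet, rfl⟩ := h
  refine ⟨Matrix.reindex e e P, by rwa [det_reindex_self], ?_⟩
  simp [reindex_apply, submatrix_mul_equiv]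

theorem fromBlocks_zero {A B : Matrix n n R} {C D : Matrix m m R} (hAB : Cogredient A B)
    (hCD : Cogredient C D) : Cogredient (fromBlocks A 0 0 C) (fromBlocks B 0 0 D) := by
  obtain ⟨P, hP, rfl⟩ := hAB
  obtain ⟨Q, hQ, rfl⟩ := hCD
  refine ⟨fromBlocks P 0 0 Q, by simpa [det_fromBlocks_zero₁₂] using hP.mul hQ, ?_⟩
  simp [fromBlocks_transpose, fromBlocks_multiply]

theorem one_of_mul_transpose_eq {P S : Matrix n n R} (hP : P * Pᵀ = S) (hS : IsUnit S.det) :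
    Cogredient 1 S := by
  refine ⟨P, ?_, by rwa [mul_one]⟩
  rw [← hP, det_mul, det_transpose] at hS
  exact isUnit_of_mul_isUnit_left hS

end Cogredient

theorem exists_mul_transpose_eq_neg_one {a b : R} (hab : a ^ 2 + b ^ 2 = -1) (e : n ≃ m ⊕ m) :
    ∃ N : Matrix n n R, N * Nᵀ = -1 := by
  let N₀ : Matrix (m ⊕ m) (m ⊕ m) R := fromBlocks (a • 1) (b • 1) (b • 1) (-(a • 1))
  have hN₀ : N₀ * N₀ᵀ = -1 := by
    have hab' : a * a + b * b = -1 := by linear_combination hab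
    simp [N₀, fromBlocks_transpose, fromBlocks_multiply, smul_smul, ← add_smul, mul_comm a b,
      add_comm (b * b), hab', ← fromBlocks_one, fromBlocks_neg]
  refine ⟨Matrix.reindex e.symm e.symm N₀, ?_⟩
  simp [reindex_apply, submatrix_mul_equiv, hN₀, submatrix_neg]

theorem cogredient_one_fromBlocks_zero_one_one_zero (h2 : IsUnit (2 : R)) {N : Matrix n n R}
    (hN : N * Nᵀ = -1) : Cogredient (1 : Matrix (n ⊕ n) (n ⊕ n) R) (fromBlocks 0 1 1 0) := by
  obtain ⟨h, hh⟩ := h2.exists_right_inv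
  have hh : h + h = 1 := by rw [← two_mul, hh]
  let P : Matrix (n ⊕ n) (n ⊕ n) R := fromBlocks 1 N (h • 1) (-(h • N))
  have hP : P * Pᵀ = fromBlocks 0 1 1 0 := by
    simp [P, fromBlocks_transpose, fromBlocks_multiply, hN, ← add_smul, hh]
  refine Cogredient.one_of_mul_transpose_eq hP
    (.of_mul_eq_one (fromBlocks 0 1 1 0 : Matrix (n ⊕ n) (n ⊕ n) R).det ?_)
  rw [← det_mul, fromBlocks_multiply]
  simp

end

theorem stmt_15_general (R : Type*) [CommRing R] [IsLocalRing R] [Fintype R]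
    (hchar : Odd (ringChar R))
    (ν : ℕ) (hνeven : Even ν) :
    Cogredient (1 : Matrix (Fin (ν + ν)) (Fin (ν + ν)) R) (hypMat R ν) ∧
      Cogredient (1 : Matrix (Fin (ν + ν + 1)) (Fin (ν + ν + 1)) R)
        (matOplus (hypMat R ν) (1 : Matrix (Fin 1) (Fin 1) R)) := by
  have h2 : IsUnit (2 : R) := isUnit_two_of_odd_ringChar hchar
  obtain ⟨a, b, hab⟩ := exists_sq_add_sq_eq_neg_one h2
  obtain ⟨μ, rfl⟩ := hνeven
  obtain ⟨N, hN⟩ := exists_mul_transpose_eq_neg_one hab (finSumFinEquiv (m := μ) (n := μ)).symm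
  have hH : Cogredient 1 (hypMat R (μ + μ)) := by
    simpa [hypMat] using
      (cogredient_one_fromBlocks_zero_one_one_zero h2 hN).reindex finSumFinEquiv
  exact ⟨hH, by simpa [matOplus] using (hH.fromBlocks_zero (.refl 1)).reindex finSumFinEquiv⟩

/-- if -1 is not a square of a unit and ν is a positive even integer, then
`I_{2ν}` is cogredient to `H_{2ν}` and `I_{2ν+1}` is cogredient to `H_{2ν} ⊕ (1)`. -/
theorem stmt_15 (R : Type*) [CommRing R] [IsLocalRing R] [Fintype R]
    (hchar : Odd (ringChar R)) (hm1 : ∀ a : Rˣ, (-1 : R) ≠ (a : R) ^ 2)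
    (ν : ℕ) (hν : 0 < ν) (hνeven : Even ν) :
    Cogredient (1 : Matrix (Fin (ν + ν)) (Fin (ν + ν)) R) (hypMat R ν) ∧
      Cogredient (1 : Matrix (Fin (ν + ν + 1)) (Fin (ν + ν + 1)) R)
        (matOplus (hypMat R ν) (1 : Matrix (Fin 1) (Fin 1) R)) :=
  stmt_15_general R hchar ν hνeven
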